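/- Let α > 0, let f ∈ L¹[−π,π] with f ≥ 0, let b ∈ (−π,0) ∪ (0,π), let f_H be the polarization of f with respect to b, and let u_f and u_{f_H} be the solutions of the Robin problem with heat sources f and f_H respectively. Set I = [b,π] if b > 0 and I = [−π,b] if b < 0. Then for every x ∈ I, writing x' = 2b − x, one has u_f(x) + u_f(x') ≤ u_{f_H}(x) + u_{f_H}(x'). -/

import Mathlib

open MeasureTheory Real Set

/-- The constant `c_α = α/(1+απ)`. -/
noncomputable def cA (α : ℝ) : ℝ := α / (1 + α * π)

/-- The Green's function of the Robin problem on `[-π, π]`. -/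
noncomputable def robinGreen (α x y : ℝ) : ℝ :=
  -(1/2) * cA α * x * y - (1/2) * |x - y| + 1 / (2 * cA α)

/-- The solution of the Robin problem with heat source `f`. -/
noncomputable def robinSol (α : ℝ) (f : ℝ → ℝ) (x : ℝ) : ℝ :=
  ∫ y in (-π)..π, robinGreen α x y * f y

/-- The polarization (towards zero) of `f : [-π,π] → ℝ` with respect to `b`. -/
noncomputable def polar (b : ℝ) (f : ℝ → ℝ) (x : ℝ) : ℝ :=
  if 0 < b then
    if x < 2 * b - π then f x
    else if x ≤ b then max (f x) (f (2 * b - x))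
    else min (f x) (f (2 * b - x))
  else
    if x ≤ b then min (f x) (f (2 * b - x))
    else if x ≤ 2 * b + π then max (f x) (f (2 * b - x))
    else f x

/-!
For `b > 0` put `K(t) = G(x, t) + G(2b - x, t)`. A direct computation gives
`K(t) - K(2b - t) = 2 c_α b (b - t)`, so on each pair `{t, 2b - t}` the kernel is larger at
the point left of `b`. Polarization leaves `f` unchanged on `[-π, 2b - π)` and, on
`[2b - π, π]`, puts the larger of `f(t)`, `f(2b - t)` at that point. Folding `[b, π]` onto
`[2b - π, b]` reduces the claim to the two-point rearrangement inequality
`p a + q d ≤ p max(a, d) + q min(a, d)` for `q ≤ p`. The case `b < 0` follows from the case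
`-b > 0` through the symmetry `G(-x, -y) = G(x, y)`.
-/

open scoped Interval

lemma mul_add_mul_le_mul_max_add_mul_min {p q a d : ℝ} (hqp : q ≤ p) :
    p * a + q * d ≤ p * max a d + q * min a d := by
  rcases le_total a d with had | hda
  · rw [max_eq_right had, min_eq_left had]; nlinarith
  · rw [max_eq_left hda, min_eq_right hda]

namespace IntervalIntegrable

variable {f g : ℝ → ℝ} {μ : Measure ℝ} {a b c : ℝ}

protected lemma sup (hf : IntervalIntegrable f μ a b) (hg : IntervalIntegrable g μ a b) :
    IntervalIntegrable (fun t => max (f t) (g t)) μ a b :=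
  intervalIntegrable_iff.2 ((intervalIntegrable_iff.1 hf).sup (intervalIntegrable_iff.1 hg))

protected lemma inf (hf : IntervalIntegrable f μ a b) (hg : IntervalIntegrable g μ a b) :
    IntervalIntegrable (fun t => min (f t) (g t)) μ a b :=
  intervalIntegrable_iff.2 ((intervalIntegrable_iff.1 hf).inf (intervalIntegrable_iff.1 hg))

lemma comp_reflect (hf : IntervalIntegrable f volume (2 * b - c) c) :
    IntervalIntegrable (fun t => f (2 * b - t)) volume (2 * b - c) c := by
  simpa only [sub_sub_cancel] using (hf.comp_sub_left (2 * b)).symm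

end IntervalIntegrable

section Polarized

variable {K f g : ℝ → ℝ} {b c : ℝ}

theorem integral_eq_integral_add_comp_reflect (hbc : b ≤ c)
    (hf : IntervalIntegrable f volume (2 * b - c) c) :
    ∫ t in (2 * b - c)..c, f t = ∫ t in (2 * b - c)..b, (f t + f (2 * b - t)) := by
  have hb : b ∈ [[2 * b - c, c]] := mem_uIcc_of_le (by linarith) hbc
  obtain ⟨hleft, hright⟩ := (IntervalIntegrable.trans_iff hb).1 hf
  obtain ⟨hleft', -⟩ := (IntervalIntegrable.trans_iff hb).1 hf.comp_reflect
  rw [← intervalIntegral.integral_add_adjacent_intervals hleft hright,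
    intervalIntegral.integral_add hleft hleft', intervalIntegral.integral_comp_sub_left,
    sub_sub_cancel, two_mul, add_sub_cancel_right]

lemma IntervalIntegrable.of_eqOn_max_of_eqOn_min (hbc : b ≤ c)
    (hf : IntervalIntegrable f volume (2 * b - c) c)
    (hmax : EqOn g (fun t => max (f t) (f (2 * b - t))) (Icc (2 * b - c) b))
    (hmin : EqOn g (fun t => min (f t) (f (2 * b - t))) (Icc b c)) :
    IntervalIntegrable g volume (2 * b - c) c := by
  have hb : b ∈ [[2 * b - c, c]] := mem_uIcc_of_le (by linarith) hbc
  obtain ⟨hleft, -⟩ := (IntervalIntegrable.trans_iff hb).1 (hf.sup hf.comp_reflect)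
  obtain ⟨-, hright⟩ := (IntervalIntegrable.trans_iff hb).1 (hf.inf hf.comp_reflect)
  refine (IntervalIntegrable.trans_iff hb).2 ⟨?_, ?_⟩
  · refine hleft.congr_uIoo (hmax.symm.mono ?_)
    rw [uIoo_of_le (by linarith)]
    exact Ioo_subset_Icc_self
  · refine hright.congr_uIoo (hmin.symm.mono ?_)
    rw [uIoo_of_le hbc]
    exact Ioo_subset_Icc_self

theorem integral_mul_le_integral_mul_of_eqOn_max_of_eqOn_min (hbc : b ≤ c) (hK : Continuous K)
    (hKt : ∀ t ∈ Icc (2 * b - c) b, K (2 * b - t) ≤ K t)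
    (hf : IntervalIntegrable f volume (2 * b - c) c)
    (hmax : EqOn g (fun t => max (f t) (f (2 * b - t))) (Icc (2 * b - c) b))
    (hmin : EqOn g (fun t => min (f t) (f (2 * b - t))) (Icc b c)) :
    ∫ t in (2 * b - c)..c, K t * f t ≤ ∫ t in (2 * b - c)..c, K t * g t := by
  have hg := IntervalIntegrable.of_eqOn_max_of_eqOn_min hbc hf hmax hmin
  have hKf := hf.continuousOn_mul hK.continuousOn
  have hKg := hg.continuousOn_mul hK.continuousOn
  have hb : [[2 * b - c, b]] ⊆ [[2 * b - c, c]] :=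
    uIcc_subset_uIcc_left (mem_uIcc_of_le (by linarith) hbc)
  rw [integral_eq_integral_add_comp_reflect hbc hKf, integral_eq_integral_add_comp_reflect hbc hKg]
  refine intervalIntegral.integral_mono_on (by linarith)
    ((hKf.add hKf.comp_reflect).mono_set hb) ((hKg.add hKg.comp_reflect).mono_set hb) ?_
  intro t ht
  have hσt : 2 * b - t ∈ Icc b c := ⟨by linarith [ht.2], by linarith [ht.1]⟩
  simp only [hmax ht, hmin hσt, sub_sub_cancel, min_comm (f (2 * b - t))]
  exact mul_add_mul_le_mul_max_add_mul_min (hKt t ht)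

end Polarized

section Robin

variable {α b x : ℝ} {f : ℝ → ℝ}

lemma cA_pos (hα : 0 < α) : 0 < cA α := div_pos hα (by positivity)

lemma continuous_robinGreen (α x : ℝ) : Continuous (robinGreen α x) := by
  unfold robinGreen; fun_prop

lemma robinGreen_neg_neg (α x y : ℝ) : robinGreen α (-x) (-y) = robinGreen α x y := by
  unfold robinGreen
  rw [← neg_add', abs_neg, ← sub_eq_add_neg]
  ring

lemma robinGreen_add_reflect_sub_reflect (α b x t : ℝ) :
    (robinGreen α x t + robinGreen α (2 * b - x) t)
      - (robinGreen α x (2 * b - t) + robinGreen α (2 * b - x) (2 * b - t))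
      = 2 * cA α * b * (b - t) := by
  unfold robinGreen
  rw [show x - (2 * b - t) = -(2 * b - x - t) by ring, abs_neg,
    show 2 * b - x - (2 * b - t) = -(x - t) by ring, abs_neg]
  ring

lemma robinGreen_add_reflect_le (hα : 0 < α) (hb : 0 ≤ b) {t : ℝ} (ht : t ≤ b) :
    robinGreen α x (2 * b - t) + robinGreen α (2 * b - x) (2 * b - t)
      ≤ robinGreen α x t + robinGreen α (2 * b - x) t := by
  have hdiff := robinGreen_add_reflect_sub_reflect α b x t
  have hcA := cA_pos hα
  have hbt := sub_nonneg.2 ht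
  have : 0 ≤ 2 * cA α * b * (b - t) := by positivity
  linarith

lemma robinSol_add_robinSol (hf : IntervalIntegrable f volume (-π) π) (x y : ℝ) :
    robinSol α f x + robinSol α f y
      = ∫ t in (-π)..π, (robinGreen α x t + robinGreen α y t) * f t := by
  simp only [robinSol, add_mul]
  exact (intervalIntegral.integral_add
    (hf.continuousOn_mul (continuous_robinGreen α x).continuousOn)
    (hf.continuousOn_mul (continuous_robinGreen α y).continuousOn)).symm

lemma robinSol_comp_neg (α : ℝ) (f : ℝ → ℝ) (x : ℝ) :
    robinSol α (fun y => f (-y)) (-x) = robinSol α f x := by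
  unfold robinSol
  simpa only [neg_neg, robinGreen_neg_neg] using
    intervalIntegral.integral_comp_neg (a := -π) (b := π) (fun y => robinGreen α (-x) (-y) * f y)

lemma polar_comp_neg (hπb : -π < b) (hb : b < 0) (f : ℝ → ℝ) :
    polar (-b) (fun y => f (-y)) = fun z => polar b f (-z) := by
  funext z
  unfold polar
  rw [if_pos (neg_pos.2 hb), if_neg (not_lt.2 hb.le)]
  rcases eq_or_ne z (-b) with rfl | hz
  · simp only [neg_neg, show 2 * -b - -b = -b by ring, show 2 * b - b = b by ring, max_self,
      min_self]
    split_ifs <;> grind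
  · split_ifs <;> grind

end Robin

section PolarPos

variable {b : ℝ} {f : ℝ → ℝ}

lemma polar_eqOn_of_lt (hb : 0 < b) : EqOn (polar b f) f (Iio (2 * b - π)) := by
  intro t ht
  simp only [polar, if_pos hb, if_pos (show t < 2 * b - π from ht)]

lemma polar_eqOn_max (hb : 0 < b) :
    EqOn (polar b f) (fun t => max (f t) (f (2 * b - t))) (Icc (2 * b - π) b) := by
  intro t ht
  simp only [polar, if_pos hb, if_neg (not_lt.2 ht.1), if_pos ht.2]

lemma polar_eqOn_min (hb : 0 < b) (hbπ : b < π) :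
    EqOn (polar b f) (fun t => min (f t) (f (2 * b - t))) (Icc b π) := by
  intro t ht
  rcases ht.1.eq_or_lt with rfl | hbt
  · simp [polar, hb, show 2 * b - b = b by ring]
  · simp only [polar, if_pos hb, if_neg (show ¬ t < 2 * b - π by linarith),
      if_neg (not_le.2 hbt)]

end PolarPos

theorem robinSol_add_reflected_le_polar_of_pos {α b : ℝ} {f : ℝ → ℝ} (hα : 0 < α)
    (hf : IntervalIntegrable f volume (-π) π) (hb : 0 < b) (hbπ : b < π) {x : ℝ} :
    robinSol α f x + robinSol α f (2 * b - x) ≤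
      robinSol α (polar b f) x + robinSol α (polar b f) (2 * b - x) := by
  have hK : Continuous fun t => robinGreen α x t + robinGreen α (2 * b - x) t :=
    (continuous_robinGreen α x).add (continuous_robinGreen α _)
  have hsplit : 2 * b - π ∈ [[-π, π]] := mem_uIcc_of_le (by linarith) (by linarith)
  obtain ⟨hf₁, hf₂⟩ := (IntervalIntegrable.trans_iff hsplit).1 hf
  have hg₁ : IntervalIntegrable (polar b f) volume (-π) (2 * b - π) :=
    hf₁.congr_uIoo ((polar_eqOn_of_lt hb).symm.mono
      ((uIoo_of_le (by linarith)).subset.trans Ioo_subset_Iio_self))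
  have hg₂ : IntervalIntegrable (polar b f) volume (2 * b - π) π :=
    .of_eqOn_max_of_eqOn_min hbπ.le hf₂ (polar_eqOn_max hb) (polar_eqOn_min hb hbπ)
  rw [robinSol_add_robinSol hf, robinSol_add_robinSol (hg₁.trans hg₂),
    ← intervalIntegral.integral_add_adjacent_intervals (hf₁.continuousOn_mul hK.continuousOn)
      (hf₂.continuousOn_mul hK.continuousOn),
    ← intervalIntegral.integral_add_adjacent_intervals (hg₁.continuousOn_mul hK.continuousOn)
      (hg₂.continuousOn_mul hK.continuousOn)]
  refine add_le_add (intervalIntegral.integral_congr_Ioo_of_le (by linarith) ?_).le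
    (integral_mul_le_integral_mul_of_eqOn_max_of_eqOn_min hbπ.le hK
      (fun t ht => robinGreen_add_reflect_le hα hb.le ht.2) hf₂
      (polar_eqOn_max hb) (polar_eqOn_min hb hbπ))
  intro t ht
  simp only [polar_eqOn_of_lt hb ht.2]

theorem robinSol_add_reflected_le_polar_general
    (α : ℝ) (hα : 0 < α)
    (f : ℝ → ℝ) (hf : IntegrableOn f (Icc (-π) π))
    (b : ℝ) (hb : b ∈ Ioo (-π) 0 ∪ Ioo 0 π) :
    ∀ x ∈ (if 0 < b then Icc b π else Icc (-π) b),
      robinSol α f x + robinSol α f (2 * b - x) ≤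
        robinSol α (polar b f) x + robinSol α (polar b f) (2 * b - x) := by
  have hf' : IntervalIntegrable f volume (-π) π :=
    (intervalIntegrable_iff_integrableOn_Icc_of_le (by linarith [pi_pos])).2 hf
  rintro x -
  rcases hb with ⟨hπb, hb⟩ | ⟨hb, hbπ⟩
  · have hf_neg : IntervalIntegrable (fun y => f (-y)) volume (-π) π := by
      simpa only [neg_neg] using ((IntervalIntegrable.iff_comp_neg).1 hf').symm
    have := robinSol_add_reflected_le_polar_of_pos (x := -x) hα hf_neg (neg_pos.2 hb)
      (by linarith)
    rwa [polar_comp_neg hπb hb, show 2 * -b - -x = -(2 * b - x) by ring, robinSol_comp_neg,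
      robinSol_comp_neg, robinSol_comp_neg, robinSol_comp_neg] at this
  · exact robinSol_add_reflected_le_polar_of_pos hα hf' hb hbπ

/-- **Sum of values of `u_f` at reflected points is increased by polarization.** -/
theorem robinSol_add_reflected_le_polar
    (α : ℝ) (hα : 0 < α)
    (f : ℝ → ℝ) (hf : IntegrableOn f (Icc (-π) π))
    (hf0 : ∀ x ∈ Icc (-π) π, 0 ≤ f x)
    (b : ℝ) (hb : b ∈ Ioo (-π) 0 ∪ Ioo 0 π) :
    ∀ x ∈ (if 0 < b then Icc b π else Icc (-π) b),
      robinSol α f x + robinSol α f (2 * b - x) ≤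
        robinSol α (polar b f) x + robinSol α (polar b f) (2 * b - x) :=
  robinSol_add_reflected_le_polar_general α hα f hf b hb
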